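/- For the symmetric beta density, the following pointwise monotonicity in a holds at the mode: g(0; a, m) = (2a−1)!-type expression m^(2a−2)/((2m)^(2a−1) B(a,a)) = Γ(2a)/(2m Γ(a)² 2^(2a−2)) is strictly increasing in a for a ≥ 1. -/

import Mathlib

/-!
At the mode `g a m 0 = (m * (2 ^ (2a-1) B(a,a)))⁻¹`. Merging the two factors of the Beta integrand
and absorbing `2 ^ (2a-2) = 4 ^ (a-1)` gives `2 ^ (2a-1) B(a,a) = ∫₀¹ 2 (4t(1-t)) ^ (a-1) dt`, the
integral of a power of `4t(1-t) ∈ [0,1]`. That base is `< 1` away from `t = 1/2`, so the integral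
strictly decreases in `a ≥ 1` and the mode value strictly increases. Euler's
`B(a,a) = Γ(a)² / Γ(2a)` gives the closed form.
-/

open MeasureTheory Real

/-- Beta function `B(a,a)`. -/
noncomputable def betaFn (a : ℝ) : ℝ := ∫ t in (0:ℝ)..1, t ^ (a - 1) * (1 - t) ^ (a - 1)

/-- Symmetric beta density on `[-m, m]`. -/
noncomputable def g (a m x : ℝ) : ℝ :=
  if x ∈ Set.Icc (-m) m then (m ^ 2 - x ^ 2) ^ (a - 1) / ((2 * m) ^ (2 * a - 1) * betaFn a) else 0

open Set

lemma betaFn_eq_Gamma {a : ℝ} (ha : 0 < a) : betaFn a = Gamma a ^ 2 / Gamma (2 * a) := by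
  have ha' : 0 < (a : ℂ).re := by simpa using ha
  have hB : Complex.betaIntegral a a = (betaFn a : ℂ) := by
    rw [Complex.betaIntegral, betaFn, ← intervalIntegral.integral_ofReal]
    refine intervalIntegral.integral_congr fun t ht => ?_
    rw [uIcc_of_le zero_le_one] at ht
    rw [Complex.ofReal_mul, Complex.ofReal_cpow ht.1, Complex.ofReal_cpow (sub_nonneg.2 ht.2)]
    push_cast
    ring
  have h := Complex.Gamma_mul_Gamma_eq_betaIntegral ha' ha'
  rw [hB, ← two_mul, ← Complex.ofReal_ofNat, ← Complex.ofReal_mul, Complex.Gamma_ofReal,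
    Complex.Gamma_ofReal] at h
  have hre : Gamma a * Gamma a = Gamma (2 * a) * betaFn a := by exact_mod_cast h
  rw [eq_div_iff (Gamma_pos_of_pos (by linarith)).ne', sq, hre, mul_comm]

lemma betaFn_pos {a : ℝ} (ha : 0 < a) : 0 < betaFn a := by
  have := Gamma_pos_of_pos ha
  have := Gamma_pos_of_pos (by linarith : 0 < 2 * a)
  rw [betaFn_eq_Gamma ha]
  positivity

lemma g_zero_eq_inv (a : ℝ) {m : ℝ} (hm : 0 < m) :
    g a m 0 = (m * (2 ^ (2 * a - 1) * betaFn a))⁻¹ := by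
  rw [g, if_pos ⟨by linarith, hm.le⟩, zero_pow two_ne_zero, sub_zero,
    mul_rpow zero_le_two hm.le, ← rpow_natCast, ← rpow_mul hm.le]
  have hpow : m ^ (2 * a - 1) = m ^ ((2 : ℕ) * (a - 1)) * m := by
    rw [← rpow_add_one hm.ne']; push_cast; ring_nf
  rw [hpow]
  have := (rpow_pos_of_pos hm ((2 : ℕ) * (a - 1))).ne'
  field_simp

lemma two_rpow_mul_betaFn_eq_integral (a : ℝ) :
    2 ^ (2 * a - 1) * betaFn a = ∫ t in (0 : ℝ)..1, 2 * (4 * t * (1 - t)) ^ (a - 1) := by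
  rw [betaFn, ← intervalIntegral.integral_const_mul]
  refine intervalIntegral.integral_congr fun t ht => ?_
  rw [uIcc_of_le zero_le_one] at ht
  have h4 : (4 : ℝ) ^ (a - 1) = 2 ^ (2 * (a - 1)) := by
    rw [rpow_mul zero_le_two]; norm_num
  have h2 : (2 : ℝ) ^ (2 * a - 1) = 2 * 2 ^ (2 * (a - 1)) := by
    rw [show 2 * a - 1 = 1 + 2 * (a - 1) by ring, rpow_add two_pos, rpow_one]
  rw [mul_rpow (by linarith [ht.1]) (sub_nonneg.2 ht.2), mul_rpow (by norm_num) ht.1, h4, h2]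
  ring

lemma strictAntiOn_two_rpow_mul_betaFn :
    StrictAntiOn (fun a => 2 ^ (2 * a - 1) * betaFn a) (Ici 1) := by
  intro a ha b hb hab
  simp only [two_rpow_mul_betaFn_eq_integral]
  have hcont : ∀ c : ℝ, 1 ≤ c →
      ContinuousOn (fun t : ℝ => 2 * (4 * t * (1 - t)) ^ (c - 1)) (Icc 0 1) :=
    fun c hc => (continuous_const.mul
      ((continuous_rpow_const (sub_nonneg.2 hc)).comp (by fun_prop))).continuousOn
  refine intervalIntegral.integral_lt_integral_of_continuousOn_of_le_of_exists_lt zero_lt_one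
    (hcont b hb) (hcont a ha) (fun t ht => ?_) ⟨1 / 4, by norm_num, ?_⟩
  · have hu0 : 0 ≤ 4 * t * (1 - t) := by nlinarith [ht.1, ht.2]
    have hu1 : 4 * t * (1 - t) ≤ 1 := by nlinarith [sq_nonneg (2 * t - 1)]
    gcongr 2 * ?_
    exact rpow_le_rpow_of_exponent_ge' hu0 hu1 (sub_nonneg.2 ha) (by linarith)
  · norm_num [hab]

lemma g_zero_eq_Gamma {a m : ℝ} (ha : 0 < a) (hm : 0 < m) :
    g a m 0 = Gamma (2 * a) / (2 ^ (2 * a - 1) * m * Gamma a ^ 2) := by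
  have := (Gamma_pos_of_pos ha).ne'
  have := (Gamma_pos_of_pos (by linarith : 0 < 2 * a)).ne'
  rw [g_zero_eq_inv a hm, betaFn_eq_Gamma ha]
  field_simp

theorem symmetricBeta_mode_value_strictMono (m : ℝ) (hm : 0 < m) :
    StrictMonoOn (fun a : ℝ => g a m 0) (Set.Ici 1) ∧
    ∀ a : ℝ, 1 ≤ a →
      g a m 0 = Real.Gamma (2 * a) / (2 ^ (2 * a - 1) * m * Real.Gamma a ^ 2) := by
  refine ⟨fun a ha b hb hab => ?_, fun a ha => g_zero_eq_Gamma (by linarith) hm⟩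
  have hb_pos : 0 < 2 ^ (2 * b - 1) * betaFn b :=
    mul_pos (rpow_pos_of_pos two_pos _) (betaFn_pos (by linarith [mem_Ici.1 hb]))
  simp only [g_zero_eq_inv _ hm]
  gcongr (m * ?_)⁻¹
  exact strictAntiOn_two_rpow_mul_betaFn ha hb hab
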